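/- Let V and V̂ be unitaries on K ⊗ K with V multiplicative, V̂ multiplicative, and suppose V̂₁₂ commutes with V₂₃ on K ⊗ K ⊗ K. Then V̂⁻¹ V̂₂₃⁻¹ V̂ = ε₂₃⁻¹ V̂⁻¹ ε₂₃ V̂₂₃⁻¹, where ε := V ϑ V̂ and ϑ is the flip on K ⊗ K, both sides being operators on K ⊗ K ⊗ K (with V̂ acting on factors 1,2 when unsubscripted). -/
import Mathlib

open TensorProduct

noncomputable section

section Legs

variable (A B C : Type*) [AddCommGroup A] [Module ℂ A] [AddCommGroup B] [Module ℂ B]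
  [AddCommGroup C] [Module ℂ C]

/-- A unitary `X` on the first two tensor factors, amplified to a triple tensor product. -/
def leg12 (X : A ⊗[ℂ] B ≃ₗ[ℂ] A ⊗[ℂ] B) :
    (A ⊗[ℂ] B) ⊗[ℂ] C ≃ₗ[ℂ] (A ⊗[ℂ] B) ⊗[ℂ] C :=
  TensorProduct.congr X (LinearEquiv.refl ℂ C)

/-- A unitary `X` on the last two tensor factors, amplified to a triple tensor product. -/
def leg23 (X : B ⊗[ℂ] C ≃ₗ[ℂ] B ⊗[ℂ] C) :
    (A ⊗[ℂ] B) ⊗[ℂ] C ≃ₗ[ℂ] (A ⊗[ℂ] B) ⊗[ℂ] C :=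
  (TensorProduct.assoc ℂ A B C).trans
    ((TensorProduct.congr (LinearEquiv.refl ℂ A) X).trans
      (TensorProduct.assoc ℂ A B C).symm)

/-- The flip of the second and third tensor factors. -/
def swap23 : (A ⊗[ℂ] B) ⊗[ℂ] C ≃ₗ[ℂ] (A ⊗[ℂ] C) ⊗[ℂ] B :=
  (TensorProduct.assoc ℂ A B C).trans
    ((TensorProduct.congr (LinearEquiv.refl ℂ A) (TensorProduct.comm ℂ B C)).trans
      (TensorProduct.assoc ℂ A C B).symm)

/-- A unitary `X` on the first and third tensor factors, amplified to a triple tensor product. -/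
def leg13 (X : A ⊗[ℂ] C ≃ₗ[ℂ] A ⊗[ℂ] C) :
    (A ⊗[ℂ] B) ⊗[ℂ] C ≃ₗ[ℂ] (A ⊗[ℂ] B) ⊗[ℂ] C :=
  (swap23 A B C).trans ((leg12 A C B X).trans (swap23 A C B))

end Legs

/-- `V` is a multiplicative unitary: the pentagon equation `V₁₂V₁₃V₂₃ = V₂₃V₁₂`
(operator products read right to left, i.e. `V₂₃` acts first on the left-hand side). -/
def Pentagon (K : Type*) [AddCommGroup K] [Module ℂ K]
    (V : K ⊗[ℂ] K ≃ₗ[ℂ] K ⊗[ℂ] K) : Prop :=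
  (leg23 K K K V).trans ((leg13 K K K V).trans (leg12 K K K V)) =
    (leg12 K K K V).trans (leg23 K K K V)

/-- `W` (a unitary on `H ⊗ K`) is a representation of `V`:  `W₁₂W₁₃V₂₃ = V₂₃W₁₂`. -/
def IsRepn (H K : Type*) [AddCommGroup H] [Module ℂ H] [AddCommGroup K] [Module ℂ K]
    (V : K ⊗[ℂ] K ≃ₗ[ℂ] K ⊗[ℂ] K) (W : H ⊗[ℂ] K ≃ₗ[ℂ] H ⊗[ℂ] K) : Prop :=
  (leg23 H K K V).trans ((leg13 H K K W).trans (leg12 H K K W)) =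
    (leg12 H K K W).trans (leg23 H K K V)

/-- leg23 is multiplicative. -/
lemma leg23_trans (A B C : Type*) [AddCommGroup A] [Module ℂ A] [AddCommGroup B] [Module ℂ B]
    [AddCommGroup C] [Module ℂ C] (X Y : B ⊗[ℂ] C ≃ₗ[ℂ] B ⊗[ℂ] C) :
    leg23 A B C (X.trans Y) = (leg23 A B C X).trans (leg23 A B C Y) := by
  apply LinearEquiv.toLinearMap_injective
  ext a b c
  simp [leg23]

/-- the flip squares to one. -/
lemma swap_sq (A B : Type*) [AddCommGroup A] [Module ℂ A] [AddCommGroup B] [Module ℂ B] :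
    (leg23 A B B (TensorProduct.comm ℂ B B)).trans (leg23 A B B (TensorProduct.comm ℂ B B))
      = LinearEquiv.refl ℂ _ := by
  apply LinearEquiv.toLinearMap_injective
  ext a b c
  simp [leg23]

lemma grp_aux {G : Type*} [Group G] (a b c v s e : G)
    (hpent : a * c * b = b * a) (hcomm : a * v = v * a)
    (hc : c = s * a * s) (hs : s * s = 1) (he : e = v * s * b) :
    a⁻¹ * b⁻¹ * a = e⁻¹ * a⁻¹ * e * b⁻¹ := by
  have hsinv : s⁻¹ = s := by
    rw [inv_eq_iff_mul_eq_one, hs]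
  have hLHS : a⁻¹ * b⁻¹ * a = b⁻¹ * c⁻¹ := by
    have hba : b * a = a * (c * b) := by rw [← mul_assoc, ← hpent]
    have h1 : a⁻¹ * b * a = c * b := by
      calc a⁻¹ * b * a = a⁻¹ * (b * a) := by group
        _ = a⁻¹ * (a * (c * b)) := by rw [hba]
        _ = c * b := by group
    calc a⁻¹ * b⁻¹ * a = (a⁻¹ * b * a)⁻¹ := by group
      _ = (c * b)⁻¹ := by rw [h1]
      _ = b⁻¹ * c⁻¹ := by group
  have hvc : v⁻¹ * a⁻¹ * v = a⁻¹ := by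
    have h2 : v⁻¹ * a⁻¹ = a⁻¹ * v⁻¹ := by
      rw [← mul_inv_rev, ← mul_inv_rev, hcomm]
    calc v⁻¹ * a⁻¹ * v = a⁻¹ * v⁻¹ * v := by rw [h2]
      _ = a⁻¹ := by group
  rw [hLHS, he, hc]
  calc b⁻¹ * (s * a * s)⁻¹ = b⁻¹ * s⁻¹ * a⁻¹ * s⁻¹ := by group
    _ = b⁻¹ * s⁻¹ * a⁻¹ * s := by nth_rewrite 2 [hsinv]; rfl
    _ = b⁻¹ * s⁻¹ * (v⁻¹ * a⁻¹ * v) * s := by rw [hvc]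
    _ = (v * s * b)⁻¹ * a⁻¹ * (v * s * b) * b⁻¹ := by group

/-- **Lemma A.3.** Let `V`, `V̂` be multiplicative unitaries on `K ⊗ K` with
`V̂₁₂V₂₃ = V₂₃V̂₁₂`.  Setting `ε := VϑV̂` (with `ϑ` the flip on `K ⊗ K`), one has
`V̂⁻¹ V̂₂₃⁻¹ V̂ = ε₂₃⁻¹ V̂⁻¹ ε₂₃ V̂₂₃⁻¹` on `K ⊗ K ⊗ K`, the unsubscripted operators acting
on the first two factors, operator products read right to left. -/
theorem lemma_A3
    (K : Type*) [NormedAddCommGroup K] [InnerProductSpace ℂ K] [CompleteSpace K]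
    (V Vh : K ⊗[ℂ] K ≃ₗ[ℂ] K ⊗[ℂ] K)
    (hV : Pentagon K V) (hVh : Pentagon K Vh)
    (hcomm : (leg23 K K K V).trans (leg12 K K K Vh)
           = (leg12 K K K Vh).trans (leg23 K K K V)) :
    (leg12 K K K Vh).trans ((leg23 K K K Vh).symm.trans (leg12 K K K Vh).symm)
      = (leg23 K K K Vh).symm.trans
          ((leg23 K K K (Vh.trans ((TensorProduct.comm ℂ K K).trans V))).trans
            ((leg12 K K K Vh).symm.trans
              (leg23 K K K (Vh.trans ((TensorProduct.comm ℂ K K).trans V))).symm)) := by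
  have hE : leg23 K K K (Vh.trans ((TensorProduct.comm ℂ K K).trans V))
      = leg23 K K K V * leg23 K K K (TensorProduct.comm ℂ K K) * leg23 K K K Vh := by
    rw [leg23_trans, leg23_trans]; rfl
  have hpent : leg12 K K K Vh * leg13 K K K Vh * leg23 K K K Vh
      = leg23 K K K Vh * leg12 K K K Vh := hVh
  have hcomm' : leg12 K K K Vh * leg23 K K K V = leg23 K K K V * leg12 K K K Vh := hcomm
  have hc : leg13 K K K Vh
      = leg23 K K K (TensorProduct.comm ℂ K K) * leg12 K K K Vh
        * leg23 K K K (TensorProduct.comm ℂ K K) := rfl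
  have hs : leg23 K K K (TensorProduct.comm ℂ K K) * leg23 K K K (TensorProduct.comm ℂ K K)
      = 1 := swap_sq K K
  exact grp_aux _ _ _ _ _ _ hpent hcomm' hc hs hE
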